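/- Let q1 = ((((κ−1)/n)+1)^{1/2} − 1)/((((κ−1)/n)+1)^{1/2} + 1) and x* ∈ ℝ^d be the minimizer of F, whose ((i−1)p+j)-th coordinate equals q1^j, and set B = ‖x*‖₂. Let K_1,…,K_n be nonnegative integers with K = ∑_{i=1}^n K_i satisfying 2K ≤ np. Then for every x ∈ ℝ^d such that, for each i and each j > K_i, the coordinate x_{(i−1)p+j} = 0, it holds that F(x) − F(x*) ≥ (B²μ/4)·q1^{2K/n}. -/

import Mathlib

open Finset
open scoped RealInnerProductSpace

/-- The `p × p` tridiagonal matrix with diagonal entries `2` except the last one, which is `ξ`,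
and `-1` on the sub- and super-diagonal. -/
noncomputable def Tmat (p : ℕ) (ξ : ℝ) : Matrix (Fin p) (Fin p) ℝ :=
  fun j k =>
    if j = k then (if (j : ℕ) = p - 1 then ξ else 2)
    else if (j : ℕ) + 1 = (k : ℕ) ∨ (k : ℕ) + 1 = (j : ℕ) then -1 else 0

/-- The `d × d` matrix (`d = np`, coordinates indexed by `Fin n × Fin p`) which is zero outside
the `i`-th diagonal `p × p` block, and whose `i`-th diagonal block is `Tmat p ξ`. -/
noncomputable def Amat (n p : ℕ) (ξ : ℝ) (i : Fin n) :
    Matrix (Fin n × Fin p) (Fin n × Fin p) ℝ :=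
  fun a b => if a.1 = i ∧ b.1 = i then Tmat p ξ a.2 b.2 else 0

/-- The component function
`f_i(x) = ((L−μ)/4) ((1/2)⟨x, A_i x⟩ − ⟨e_{(i−1)p+1}, x⟩) + (μ/2)‖x‖²`. -/
noncomputable def fComp1 (n p : ℕ) [NeZero p] (L μ ξ : ℝ) (i : Fin n)
    (x : EuclideanSpace ℝ (Fin n × Fin p)) : ℝ :=
  ((L - μ) / 4) *
      ((1 / 2) * (∑ a : Fin n × Fin p, ∑ b : Fin n × Fin p, x a * Amat n p ξ i a b * x b)
        - x (i, 0)) +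
    (μ / 2) * ‖x‖ ^ 2

/-!
`F` is a quadratic function whose Hessian dominates `μ • 1`: each tridiagonal block `Tmat p ξ`
is diagonally dominant once `ξ ≥ 1`, hence positive semidefinite by Gershgorin. Expanding `F`
along the segment from its minimiser `x*` then gives `F x - F x* ≥ (μ / 2) ‖x - x*‖²`.

A vector supported on the first `K i` coordinates of each block misses the tail of `x*`, so with
`r = q1²` we get `‖x - x*‖² ≥ r ∑ᵢ ∑_{K i ≤ j < p} rʲ ≥ r (∑ᵢ r^(K i) - n rᵖ) / (1 - r)`, while
`B² = n r (1 - rᵖ) / (1 - r)`. By AM-GM `∑ᵢ r^(K i) ≥ n a` with `a = r^(K / n)`, and `2K ≤ np`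
gives `a ≥ r^(p / 2)`, which is exactly what makes `(1 - rᵖ) a ≤ 2 (a - rᵖ)` true.
-/

open Matrix

theorem eq_zero_of_forall_mul_add_mul_sq_nonneg {b c : ℝ} (h : ∀ s : ℝ, 0 ≤ b * s + c * s ^ 2) :
    b = 0 := by
  set t := |c| + 1
  have ht : 0 < t := by positivity
  have hs : 0 ≤ b ^ 2 * (c - t) / t ^ 2 := by
    convert h (-b / t) using 1
    field_simp
    ring
  rw [le_div_iff₀ (by positivity), zero_mul] at hs
  nlinarith [le_abs_self c, sq_nonneg b]

theorem LinearMap.BilinForm.apply_sub_eq_of_forall_le {E : Type*} [AddCommGroup E] [Module ℝ E]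
    (β : LinearMap.BilinForm ℝ E) (ℓ : E →ₗ[ℝ] ℝ) {u : E}
    (hu : ∀ y, β u u + ℓ u ≤ β y y + ℓ y) (x : E) :
    β x x + ℓ x - (β u u + ℓ u) = β (x - u) (x - u) := by
  set v := x - u
  have expand : ∀ s : ℝ, β (u + s • v) (u + s • v) + ℓ (u + s • v)
      = β u u + ℓ u + (β u v + β v u + ℓ v) * s + β v v * s ^ 2 := by
    intro s
    simp only [map_add, map_smul, LinearMap.add_apply, LinearMap.smul_apply, smul_eq_mul]
    ring
  have hlin : β u v + β v u + ℓ v = 0 :=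
    eq_zero_of_forall_mul_add_mul_sq_nonneg (c := β v v) fun s => by
      linarith [hu (u + s • v), expand s]
  have h1 := expand 1
  rw [one_smul, add_sub_cancel, hlin] at h1
  rw [h1]
  ring

theorem Matrix.IsHermitian.posSemidef_of_sum_norm_le_diag {ι : Type*} [Fintype ι]
    [DecidableEq ι] {A : Matrix ι ι ℝ} (hA : A.IsHermitian)
    (hdom : ∀ k, ∑ j ∈ univ.erase k, ‖A k j‖ ≤ A k k) : A.PosSemidef := by
  rw [hA.posSemidef_iff_eigenvalues_nonneg]
  intro i
  have hev : Module.End.HasEigenvalue (toLin' A) (hA.eigenvalues i) := by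
    rw [Module.End.hasEigenvalue_iff_mem_spectrum, spectrum_toLin']
    exact hA.eigenvalues_mem_spectrum_real i
  obtain ⟨k, hk⟩ := eigenvalue_mem_ball hev
  rw [Metric.mem_closedBall, Real.dist_eq, abs_le] at hk
  show 0 ≤ hA.eigenvalues i
  linarith [hdom k, hk.1]

theorem Tmat_isHermitian (p : ℕ) (ξ : ℝ) : (Tmat p ξ).IsHermitian := by
  refine IsHermitian.ext fun j k => ?_
  simp only [Tmat, star_trivial]
  split_ifs <;> simp_all [Fin.ext_iff]

theorem Tmat_sum_norm_le_diag (p : ℕ) {ξ : ℝ} (hξ : 1 ≤ ξ) (j : Fin p) :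
    ∑ k ∈ univ.erase j, ‖Tmat p ξ j k‖ ≤ Tmat p ξ j j := by
  have hprev : #{k : Fin p | (k : ℕ) + 1 = j} ≤ 1 :=
    card_le_one.2 fun a ha b hb => by simp at ha hb; omega
  have hnext : #{k : Fin p | (j : ℕ) + 1 = k} ≤ 1 :=
    card_le_one.2 fun a ha b hb => by simp at ha hb; omega
  calc ∑ k ∈ univ.erase j, ‖Tmat p ξ j k‖
      = ∑ k ∈ univ.erase j, if (j : ℕ) + 1 = k ∨ (k : ℕ) + 1 = j then (1 : ℝ) else 0 := by
        refine sum_congr rfl fun k hk => ?_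
        rw [Tmat, if_neg (ne_of_mem_erase hk).symm]
        split_ifs <;> norm_num
    _ ≤ ∑ k : Fin p, if (j : ℕ) + 1 = k ∨ (k : ℕ) + 1 = j then (1 : ℝ) else 0 :=
        sum_le_sum_of_subset_of_nonneg (erase_subset _ _) fun _ _ _ => by positivity
    _ = #{k : Fin p | (j : ℕ) + 1 = k ∨ (k : ℕ) + 1 = j} := by
        rw [sum_boole]
    _ ≤ (#{k : Fin p | (j : ℕ) + 1 = k} + #{k : Fin p | (k : ℕ) + 1 = j} : ℕ) := by
        rw [filter_or]
        exact_mod_cast card_union_le _ _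
    _ ≤ Tmat p ξ j j := by
        simp only [Tmat, if_true]
        split_ifs with hj
        · have hlast : #{k : Fin p | (j : ℕ) + 1 = k} = 0 := by
            simp only [card_eq_zero, filter_eq_empty_iff]
            omega
          rw [hlast, zero_add]
          exact le_trans (by exact_mod_cast hprev) hξ
        · exact_mod_cast (by omega : _ ≤ 2)

theorem Tmat_posSemidef (p : ℕ) {ξ : ℝ} (hξ : 1 ≤ ξ) : (Tmat p ξ).PosSemidef :=
  (Tmat_isHermitian p ξ).posSemidef_of_sum_norm_le_diag (Tmat_sum_norm_le_diag p hξ)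

theorem dotProduct_Amat_mulVec (n p : ℕ) (ξ : ℝ) (i : Fin n) (x : Fin n × Fin p → ℝ) :
    x ⬝ᵥ (Amat n p ξ i *ᵥ x) = (fun j => x (i, j)) ⬝ᵥ (Tmat p ξ *ᵥ fun j => x (i, j)) := by
  simp [dotProduct, mulVec, Amat, Fintype.sum_prod_type, ite_and]

theorem toBilin'_Amat_self_nonneg (n p : ℕ) {ξ : ℝ} (hξ : 1 ≤ ξ) (i : Fin n)
    (x : Fin n × Fin p → ℝ) : 0 ≤ toBilin' (Amat n p ξ i) x x := by
  rw [toBilin'_apply', dotProduct_Amat_mulVec]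
  exact (Tmat_posSemidef p hξ).dotProduct_mulVec_nonneg _

noncomputable def avgF (n p : ℕ) [NeZero p] (L μ ξ : ℝ) (x : EuclideanSpace ℝ (Fin n × Fin p)) :
    ℝ :=
  (1 / (n : ℝ)) * ∑ i, fComp1 n p L μ ξ i x

theorem half_mul_norm_sub_sq_le_avgF_sub {n : ℕ} (hn : n ≠ 0) (p : ℕ) [NeZero p] {L μ ξ : ℝ}
    (hLμ : μ ≤ L) (hξ : 1 ≤ ξ) {u : EuclideanSpace ℝ (Fin n × Fin p)}
    (hu : ∀ y, avgF n p L μ ξ u ≤ avgF n p L μ ξ y) (x : EuclideanSpace ℝ (Fin n × Fin p)) :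
    μ / 2 * ‖x - u‖ ^ 2 ≤ avgF n p L μ ξ x - avgF n p L μ ξ u := by
  let e := (WithLp.linearEquiv 2 ℝ (Fin n × Fin p → ℝ)).toLinearMap
  let β : LinearMap.BilinForm ℝ (EuclideanSpace ℝ (Fin n × Fin p)) :=
    ((L - μ) / (8 * n)) • ∑ i, (toBilin' (Amat n p ξ i)).compl₁₂ e e + (μ / 2) • innerₗ _
  let ℓ : EuclideanSpace ℝ (Fin n × Fin p) →ₗ[ℝ] ℝ :=
    -((L - μ) / (4 * n)) • ∑ i, EuclideanSpace.projₗ (i, 0)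
  have hβ : ∀ y, β y y
      = (L - μ) / (8 * n) * ∑ i, toBilin' (Amat n p ξ i) y.ofLp y.ofLp + μ / 2 * ‖y‖ ^ 2 := by
    intro y
    simp only [β, e, LinearMap.add_apply, LinearMap.smul_apply, LinearMap.coe_sum,
      Finset.sum_apply, LinearMap.compl₁₂_apply, LinearEquiv.coe_coe, WithLp.linearEquiv_apply,
      AddEquiv.toEquiv_eq_coe, Equiv.toFun_as_coe, EquivLike.coe_coe, WithLp.addEquiv_apply,
      smul_eq_mul, innerₗ_apply_apply, real_inner_self_eq_norm_sq]
  have hF : ∀ y, avgF n p L μ ξ y = β y y + ℓ y := by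
    intro y
    simp only [avgF, fComp1, hβ, ℓ, ← toBilin'_apply, one_div, sum_add_distrib, ← mul_sum,
      sum_sub_distrib, sum_const, card_univ, Fintype.card_fin, nsmul_eq_mul, neg_smul,
      LinearMap.neg_apply, LinearMap.smul_apply, LinearMap.sum_apply, PiLp.projₗ_apply,
      smul_eq_mul]
    field_simp
    ring
  have hgap := β.apply_sub_eq_of_forall_le ℓ (fun y => by rw [← hF, ← hF]; exact hu y) x
  have hA := sum_nonneg fun i (_ : i ∈ univ) => toBilin'_Amat_self_nonneg n p hξ i (x - u).ofLp
  have hc : 0 ≤ (L - μ) / (8 * n) := div_nonneg (by linarith) (by positivity)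
  rw [hF, hF, hgap, hβ]
  linarith [mul_nonneg hc hA]

theorem geom_sum_Ico_ge {r : ℝ} (hr0 : 0 ≤ r) (hr1 : r < 1) (k p : ℕ) :
    (r ^ k - r ^ p) / (1 - r) ≤ ∑ j ∈ Ico k p, r ^ j := by
  rcases le_total k p with hkp | hpk
  · rw [geom_sum_Ico hr1.ne hkp, ← neg_div_neg_eq, neg_sub, neg_sub]
  · rw [Ico_eq_empty_of_le hpk, sum_empty]
    exact div_nonpos_of_nonpos_of_nonneg (sub_nonpos.2 (pow_le_pow_of_le_one hr0 hr1.le hpk))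
      (by linarith)

theorem card_mul_rpow_average_le_sum_pow {ι : Type*} [Fintype ι] {b : ℝ} (hb : 0 < b)
    (k : ι → ℕ) :
    Fintype.card ι * b ^ ((∑ i, k i : ℕ) / Fintype.card ι : ℝ) ≤ ∑ i, b ^ k i := by
  rcases isEmpty_or_nonempty ι with hι | hι
  · simp
  have hN : (0 : ℝ) < Fintype.card ι := by exact_mod_cast Fintype.card_pos
  have amgm := Real.geom_mean_le_arith_mean_weighted univ (fun _ => 1 / (Fintype.card ι : ℝ))
    (fun i => b ^ k i) (fun _ _ => by positivity) (by simp [hN.ne']) (fun _ _ => by positivity)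
  have hprod : ∏ i, (b ^ k i) ^ (1 / (Fintype.card ι : ℝ))
      = b ^ ((∑ i, k i : ℕ) / Fintype.card ι : ℝ) := by
    rw [Nat.cast_sum, sum_div, Real.rpow_sum_of_pos hb]
    refine prod_congr rfl fun i _ => ?_
    rw [← Real.rpow_natCast, ← Real.rpow_mul hb.le, mul_one_div]
  rw [hprod, ← mul_sum] at amgm
  rwa [one_div_mul_eq_div, le_div_iff₀' hN] at amgm

theorem card_mul_geom_sum_mul_rpow_le {ι : Type*} [Fintype ι] {r : ℝ} (hr0 : 0 < r) (hr1 : r < 1)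
    (p : ℕ) (k : ι → ℕ) (hk : 2 * ∑ i, k i ≤ Fintype.card ι * p) :
    Fintype.card ι * (∑ j ∈ range p, r ^ j) * r ^ ((∑ i, k i : ℕ) / Fintype.card ι : ℝ)
      ≤ 2 * ∑ i, ∑ j ∈ Ico (k i) p, r ^ j := by
  rcases isEmpty_or_nonempty ι with hι | hι
  · simp
  have hN : (0 : ℝ) < Fintype.card ι := by exact_mod_cast Fintype.card_pos
  have hKp : ((∑ i, k i : ℕ) / Fintype.card ι : ℝ) ≤ p / 2 := by
    rw [div_le_div_iff₀ hN two_pos]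
    exact_mod_cast (by linarith : (∑ i, k i) * 2 ≤ p * Fintype.card ι)
  set N : ℝ := (Fintype.card ι : ℝ)
  set a := r ^ ((∑ i, k i : ℕ) / N)
  set c := r ^ ((p : ℝ) / 2)
  have h1r : 0 < 1 - r := by linarith
  have hgeom : ∑ j ∈ range p, r ^ j = (1 - r ^ p) / (1 - r) := by
    rw [geom_sum_eq hr1.ne, ← neg_div_neg_eq, neg_sub, neg_sub]
  have hca : c ≤ a := Real.rpow_le_rpow_of_exponent_ge hr0 hr1.le hKp
  have hc2 : c ^ 2 = r ^ p := by
    rw [← Real.rpow_natCast, ← Real.rpow_mul hr0.le]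
    norm_num
  -- `(1 - c²) a ≤ 2 (a - c²)` because it holds at `a = c`, where it reads `c (1 - c)² ≥ 0`
  have key : (1 - r ^ p) * a ≤ 2 * (a - r ^ p) := by
    have hc0 : 0 ≤ c := by positivity
    rw [← hc2]
    nlinarith [mul_nonneg hc0 (sq_nonneg (1 - c)), mul_nonneg (sub_nonneg.2 hca) (sq_nonneg c)]
  calc N * (∑ j ∈ range p, r ^ j) * a
      = N * ((1 - r ^ p) * a) / (1 - r) := by rw [hgeom]; ring
    _ ≤ 2 * (N * a - N * r ^ p) / (1 - r) :=
        div_le_div_of_nonneg_right (by nlinarith [mul_le_mul_of_nonneg_left key hN.le]) h1r.le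
    _ ≤ 2 * (∑ i, r ^ k i - N * r ^ p) / (1 - r) := by
        gcongr; exact card_mul_rpow_average_le_sum_pow hr0 k
    _ = 2 * ∑ i, (r ^ k i - r ^ p) / (1 - r) := by
        rw [← sum_div, sum_sub_distrib, sum_const, card_univ, nsmul_eq_mul, mul_div_assoc]
    _ ≤ 2 * ∑ i, ∑ j ∈ Ico (k i) p, r ^ j := by
        gcongr with i; exact geom_sum_Ico_ge hr0.le hr1 (k i) p

theorem EuclideanSpace.sum_sq_le_norm_sub_sq {ι : Type*} [Fintype ι] {s : Finset ι}
    {x : EuclideanSpace ℝ ι} (hx : ∀ a ∈ s, x a = 0) (y : EuclideanSpace ℝ ι) :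
    ∑ a ∈ s, y a ^ 2 ≤ ‖x - y‖ ^ 2 := by
  rw [EuclideanSpace.real_norm_sq_eq]
  calc ∑ a ∈ s, y a ^ 2 = ∑ a ∈ s, (x - y) a ^ 2 :=
        sum_congr rfl fun a ha => by simp [hx a ha]
    _ ≤ ∑ a, (x - y) a ^ 2 := sum_le_univ_sum_of_nonneg fun _ => sq_nonneg _

theorem sum_fin_ite_le_eq_sum_Ico {M : Type*} [AddCommMonoid M] (f : ℕ → M) (k p : ℕ) :
    ∑ j : Fin p, (if k ≤ (j : ℕ) then f j else 0) = ∑ j ∈ Ico k p, f j := by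
  rw [Fin.sum_univ_eq_sum_range (fun j => if k ≤ j then f j else 0), ← sum_filter, range_eq_Ico,
    Ico_filter_le, max_eq_right (Nat.zero_le k)]

theorem sum_sq_filter_of_apply_eq_pow {n p : ℕ} {q : ℝ} {y : EuclideanSpace ℝ (Fin n × Fin p)}
    (hy : ∀ i j, y (i, j) = q ^ ((j : ℕ) + 1)) (k : Fin n → ℕ) :
    ∑ a with k a.1 ≤ (a.2 : ℕ), y a ^ 2 = q ^ 2 * ∑ i, ∑ j ∈ Ico (k i) p, (q ^ 2) ^ j := by
  rw [sum_filter, Fintype.sum_prod_type, mul_sum]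
  refine sum_congr rfl fun i _ => ?_
  rw [mul_sum, ← sum_fin_ite_le_eq_sum_Ico]
  refine sum_congr rfl fun j _ => ?_
  split_ifs <;> simp only [hy]; ring

theorem norm_sq_mul_rpow_le_two_mul_norm_sub_sq {n p : ℕ} {q : ℝ} (hq0 : 0 < q) (hq1 : q < 1)
    {y : EuclideanSpace ℝ (Fin n × Fin p)} (hy : ∀ i j, y (i, j) = q ^ ((j : ℕ) + 1))
    (K : Fin n → ℕ) (hK : 2 * ∑ i, K i ≤ n * p) {x : EuclideanSpace ℝ (Fin n × Fin p)}
    (hx : ∀ (i : Fin n) (j : Fin p), K i < (j : ℕ) + 1 → x (i, j) = 0) :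
    ‖y‖ ^ 2 * q ^ (2 * ((∑ i, K i : ℕ) : ℝ) / n) ≤ 2 * ‖x - y‖ ^ 2 := by
  have hdist := EuclideanSpace.sum_sq_le_norm_sub_sq (s := {a | K a.1 ≤ (a.2 : ℕ)})
    (fun a ha => hx a.1 a.2 (by simp at ha; omega)) y
  rw [sum_sq_filter_of_apply_eq_pow hy] at hdist
  have hnorm := sum_sq_filter_of_apply_eq_pow hy 0
  simp only [Pi.zero_apply, zero_le, filter_true, Nat.Ico_zero_eq_range, sum_const, card_univ,
    Fintype.card_fin, nsmul_eq_mul, ← EuclideanSpace.real_norm_sq_eq] at hnorm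
  have hscalar := card_mul_geom_sum_mul_rpow_le (pow_pos hq0 2) (by nlinarith) p K
    (by simpa using hK)
  rw [Fintype.card_fin] at hscalar
  have hexp : q ^ (2 * ((∑ i, K i : ℕ) : ℝ) / n) = (q ^ 2) ^ ((∑ i, K i : ℕ) / n : ℝ) := by
    rw [← Real.rpow_natCast q 2, ← Real.rpow_mul hq0.le, mul_div_assoc, Nat.cast_two]
  rw [hexp, hnorm]
  nlinarith [mul_le_mul_of_nonneg_left hscalar (sq_nonneg q)]

theorem stmt11_general (n p : ℕ) (hn : 2 ≤ n) [NeZero p]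
    (L μ κ ξ q1 : ℝ) (hμ : 0 < μ) (hLμ : μ < L) (hκ : κ = L / μ)
    (hξ : ξ = (Real.sqrt ((κ - 1) / n + 1) + 3) / (Real.sqrt ((κ - 1) / n + 1) + 1))
    (hq1 : q1 = (Real.sqrt ((κ - 1) / n + 1) - 1) / (Real.sqrt ((κ - 1) / n + 1) + 1))
    (F : EuclideanSpace ℝ (Fin n × Fin p) → ℝ)
    (hF : F = fun x => (1 / (n : ℝ)) * ∑ i : Fin n, fComp1 n p L μ ξ i x)
    (xstar : EuclideanSpace ℝ (Fin n × Fin p))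
    (hxstar : ∀ (i : Fin n) (j : Fin p), xstar (i, j) = q1 ^ ((j : ℕ) + 1))
    (hmin : ∀ y : EuclideanSpace ℝ (Fin n × Fin p), F xstar ≤ F y)
    (B : ℝ) (hB : B = ‖xstar‖)
    (K : Fin n → ℕ) (hK : 2 * ∑ i, K i ≤ n * p) :
    ∀ x : EuclideanSpace ℝ (Fin n × Fin p),
      (∀ (i : Fin n) (j : Fin p), K i < (j : ℕ) + 1 → x (i, j) = 0) →
      F x - F xstar ≥ (B ^ 2 * μ / 4) * q1 ^ ((2 * ((∑ i, K i : ℕ) : ℝ)) / n) := by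
  intro x hx
  subst hF hB
  set σ := Real.sqrt ((κ - 1) / n + 1)
  have hσ : 1 < σ := by
    have hκ1 : 1 < κ := by rwa [hκ, one_lt_div hμ]
    have : 0 < (κ - 1) / n := div_pos (by linarith) (by positivity)
    rw [Real.lt_sqrt zero_le_one]
    linarith
  have hξ1 : 1 ≤ ξ := by rw [hξ, le_div_iff₀ (by linarith)]; linarith
  have hq0 : 0 < q1 := by rw [hq1]; exact div_pos (by linarith) (by linarith)
  have hq1' : q1 < 1 := by rw [hq1, div_lt_one (by linarith)]; linarith
  have hgap := half_mul_norm_sub_sq_le_avgF_sub (by omega) p hLμ.le hξ1 hmin x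
  have hdist := norm_sq_mul_rpow_le_two_mul_norm_sub_sq hq0 hq1' hxstar K hK hx
  show avgF n p L μ ξ x - avgF n p L μ ξ xstar ≥ _
  nlinarith [mul_le_mul_of_nonneg_left hdist hμ.le]

/-- Case (1) function-value lower bound: under the support pattern produced by `K_i` queries
to `∇f_i` and `2K ≤ np`, `F(x) − F(x*) ≥ (B²μ/4) q1^{2K/n}` with `B = ‖x*‖`. -/
theorem stmt11 (n p : ℕ) (hn : 2 ≤ n) [NeZero p] (hp : 1 ≤ p)
    (L μ κ ξ q1 : ℝ) (hμ : 0 < μ) (hLμ : μ < L) (hκ : κ = L / μ)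
    (hξ : ξ = (Real.sqrt ((κ - 1) / n + 1) + 3) / (Real.sqrt ((κ - 1) / n + 1) + 1))
    (hq1 : q1 = (Real.sqrt ((κ - 1) / n + 1) - 1) / (Real.sqrt ((κ - 1) / n + 1) + 1))
    (F : EuclideanSpace ℝ (Fin n × Fin p) → ℝ)
    (hF : F = fun x => (1 / (n : ℝ)) * ∑ i : Fin n, fComp1 n p L μ ξ i x)
    (xstar : EuclideanSpace ℝ (Fin n × Fin p))
    (hxstar : ∀ (i : Fin n) (j : Fin p), xstar (i, j) = q1 ^ ((j : ℕ) + 1))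
    (hmin : ∀ y : EuclideanSpace ℝ (Fin n × Fin p), F xstar ≤ F y)
    (B : ℝ) (hB : B = ‖xstar‖)
    (K : Fin n → ℕ) (hK : 2 * ∑ i, K i ≤ n * p) :
    ∀ x : EuclideanSpace ℝ (Fin n × Fin p),
      (∀ (i : Fin n) (j : Fin p), K i < (j : ℕ) + 1 → x (i, j) = 0) →
      F x - F xstar ≥ (B ^ 2 * μ / 4) * q1 ^ ((2 * ((∑ i, K i : ℕ) : ℝ)) / n) :=
  stmt11_general n p hn L μ κ ξ q1 hμ hLμ hκ hξ hq1 F hF xstar hxstar hmin B hB K hK
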